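/- arXiv:1107.3733 — 5 statements merged into one kernel-verified Lean document; each statement's English description precedes it below -/
import Mathlib

section
/- Let S = (a,b) ⊆ ℝ be an open interval and let W, A, B, Q : S → Matrix N N ℂ be such that W·A is twice continuously differentiable, W·B is continuously differentiable, and W, Q are continuous on S, satisfying the symmetry equations on S: A(x)* W(x) = W(x) A(x), B(x)* W(x) = (W A)'(x) − W(x) B(x), and Q(x)* W(x) = ½ (W A)''(x) − (W B)'(x) + W(x) Q(x). Then the operator 𝒜F = ½ A F'' + B F' + Q F is formally self-adjoint with respect to W: for all twice continuously differentiable matrix-valued functions F, G : S → Matrix N N ℂ with compact support contained in S, ∫_S G(x)* W(x) (½ A(x) F''(x) + B(x) F'(x) + Q(x) F(x)) dx = ∫_S (½ A(x) G''(x) + B(x) G'(x) + Q(x) G(x))* W(x) F(x) dx. -/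
/-!
Integration by parts, in the form of Lagrange's identity. On `S` the symmetry equations make
`(𝒜G)* W F - G* W (𝒜F)` the derivative of the bilinear concomitant
`½ (G'* (WA) F - G* (WA) F' + G* (WA)' F) - G* (WB) F`, which vanishes outside the compact set
`tsupport F ⊆ S`; the integral over `S` of such a derivative is zero.
-/

open MeasureTheory Filter Topology Matrix

section MatrixContinuity

variable {X R l m n : Type*} [TopologicalSpace X] [TopologicalSpace R] {S : Set X}

theorem continuousOn_matrix_iff {A : X → Matrix m n R} :
    ContinuousOn A S ↔ ∀ i j, ContinuousOn (fun x => A x i j) S :=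
  continuousOn_pi.trans (forall_congr' fun _ => continuousOn_pi)

@[fun_prop]
theorem ContinuousOn.matrix_conjTranspose [Star R] [ContinuousStar R] {A : X → Matrix m n R}
    (hA : ContinuousOn A S) : ContinuousOn (fun x => (A x)ᴴ) S :=
  continuous_id.matrix_conjTranspose.comp_continuousOn hA

@[fun_prop]
theorem ContinuousOn.matrix_mul [Fintype m] [Mul R] [AddCommMonoid R] [ContinuousAdd R]
    [ContinuousMul R] {A : X → Matrix l m R} {B : X → Matrix m n R}
    (hA : ContinuousOn A S) (hB : ContinuousOn B S) : ContinuousOn (fun x => A x * B x) S :=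
  (continuous_fst.matrix_mul continuous_snd).comp_continuousOn (hA.prodMk hB)

end MatrixContinuity

theorem ContinuousOn.integrableOn_of_forall_notMem_eq_zero {X E : Type*} [TopologicalSpace X]
    [T2Space X] [MeasurableSpace X] [OpensMeasurableSpace X] [NormedAddCommGroup E]
    {μ : Measure X} [IsFiniteMeasureOnCompacts μ] {f : X → E} {S K : Set X}
    (hf : ContinuousOn f S) (hS : MeasurableSet S) (hK : IsCompact K) (hKS : K ⊆ S)
    (h0 : ∀ x ∉ K, f x = 0) : IntegrableOn f S μ :=
  ((hf.mono hKS).integrableOn_compact hK).of_forall_sdiff_eq_zero hS fun x hx => h0 x hx.2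

theorem setIntegral_eq_of_hasDerivAt_sub {E : Type*} [NormedAddCommGroup E] [NormedSpace ℝ E]
    {S K : Set ℝ} {f g φ : ℝ → E} (hS : MeasurableSet S) (hK : IsCompact K) (hKS : K ⊆ S)
    (hφ : ∀ x ∉ K, φ x = 0) (hd : ∀ x ∈ S, HasDerivAt φ (g x - f x) x)
    (hf : IntegrableOn f S) (hg : IntegrableOn g S) :
    ∫ x in S, f x = ∫ x in S, g x := by
  have hφK : tsupport φ ⊆ K :=
    closure_minimal (fun x hx => by_contra fun h => hx (hφ x h)) hK.isClosed
  have hd' : ∀ x, HasDerivAt φ (S.indicator (fun x => g x - f x) x) x := by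
    intro x
    by_cases hx : x ∈ S
    · rw [Set.indicator_of_mem hx]
      exact hd x hx
    · rw [Set.indicator_of_notMem hx]
      exact HasDerivAt.of_notMem_tsupport fun h => hx (hKS (hφK h))
  have hφint : Integrable φ :=
    (continuous_iff_continuousAt.2 fun x => (hd' x).continuousAt).integrable_of_hasCompactSupport
      (HasCompactSupport.intro hK hφ)
  have h := integral_eq_zero_of_hasDerivAt_of_integrable hd'
    ((hg.sub hf).integrable_indicator hS) hφint
  rw [integral_indicator hS, integral_sub hg hf, sub_eq_zero] at h
  exact h.symm

noncomputable section EntrywiseCalculus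

variable {𝕜 l m n : Type*} [RCLike 𝕜]

def HasEntrywiseDerivAt (f : ℝ → Matrix m n 𝕜) (f' : Matrix m n 𝕜) (x : ℝ) : Prop :=
  ∀ i j, HasDerivAt (fun y => f y i j) (f' i j) x

def entrywiseDeriv (f : ℝ → Matrix m n 𝕜) (x : ℝ) : Matrix m n 𝕜 :=
  of fun i j => deriv (fun y => f y i j) x

def EntrywiseContDiffOn (k : WithTop ℕ∞) (f : ℝ → Matrix m n 𝕜) (S : Set ℝ) : Prop :=
  ∀ i j, ContDiffOn ℝ k (fun y => f y i j) S

namespace HasEntrywiseDerivAt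

variable {f g : ℝ → Matrix m n 𝕜} {f' g' : Matrix m n 𝕜} {x : ℝ}

theorem congr_deriv (hf : HasEntrywiseDerivAt f f' x) (h : f' = g') :
    HasEntrywiseDerivAt f g' x :=
  h ▸ hf

theorem add (hf : HasEntrywiseDerivAt f f' x) (hg : HasEntrywiseDerivAt g g' x) :
    HasEntrywiseDerivAt (fun y => f y + g y) (f' + g') x := fun i j =>
  (hf i j).add (hg i j)

theorem sub (hf : HasEntrywiseDerivAt f f' x) (hg : HasEntrywiseDerivAt g g' x) :
    HasEntrywiseDerivAt (fun y => f y - g y) (f' - g') x := fun i j =>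
  (hf i j).sub (hg i j)

theorem const_smul (c : 𝕜) (hf : HasEntrywiseDerivAt f f' x) :
    HasEntrywiseDerivAt (fun y => c • f y) (c • f') x := fun i j =>
  (hf i j).const_mul c

theorem conjTranspose (hf : HasEntrywiseDerivAt f f' x) :
    HasEntrywiseDerivAt (fun y => (f y)ᴴ) f'ᴴ x := fun i j =>
  (hf j i).star

theorem mul [Fintype m] {f : ℝ → Matrix l m 𝕜} {f' : Matrix l m 𝕜}
    (hf : HasEntrywiseDerivAt f f' x) (hg : HasEntrywiseDerivAt g g' x) :
    HasEntrywiseDerivAt (fun y => f y * g y) (f' * g x + f x * g') x := fun i j => by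
  simpa only [mul_apply, Matrix.add_apply, ← Finset.sum_add_distrib] using
    HasDerivAt.fun_sum (u := Finset.univ) fun k _ => (hf i k).fun_mul (hg k j)

end HasEntrywiseDerivAt

theorem entrywiseDeriv_eq_zero_of_notMem_tsupport {f : ℝ → Matrix m n 𝕜} {x : ℝ}
    (hx : x ∉ tsupport f) : entrywiseDeriv f x = 0 := by
  ext i j
  exact deriv_of_notMem_tsupport fun h =>
    hx (tsupport_comp_subset (g := fun A : Matrix m n 𝕜 => A i j) rfl f h)

theorem tsupport_entrywiseDeriv_subset (f : ℝ → Matrix m n 𝕜) :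
    tsupport (entrywiseDeriv f) ⊆ tsupport f :=
  closure_minimal (fun _ hx => by_contra fun h => hx (entrywiseDeriv_eq_zero_of_notMem_tsupport h))
    (isClosed_tsupport f)

namespace EntrywiseContDiffOn

variable {k k' : WithTop ℕ∞} {f : ℝ → Matrix m n 𝕜} {S : Set ℝ}

theorem continuousOn (hf : EntrywiseContDiffOn k f S) : ContinuousOn f S :=
  continuousOn_matrix_iff.2 fun i j => (hf i j).continuousOn

theorem hasEntrywiseDerivAt (hf : EntrywiseContDiffOn k f S) (hS : IsOpen S) (hk : k ≠ 0)
    {x : ℝ} (hx : x ∈ S) : HasEntrywiseDerivAt f (entrywiseDeriv f x) x := fun i j =>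
  (((hf i j).contDiffAt (hS.mem_nhds hx)).differentiableAt hk).hasDerivAt

theorem entrywiseDeriv_of_isOpen (hf : EntrywiseContDiffOn k f S) (hS : IsOpen S)
    (hk : k' + 1 ≤ k) : EntrywiseContDiffOn k' (entrywiseDeriv f) S := fun i j =>
  (hf i j).deriv_of_isOpen hS hk

theorem continuousOn_entrywiseDeriv (hf : EntrywiseContDiffOn k f S) (hS : IsOpen S)
    (hk : 1 ≤ k) : ContinuousOn (entrywiseDeriv f) S :=
  continuousOn_matrix_iff.2 fun i j => (hf i j).continuousOn_deriv_of_isOpen hS hk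

theorem hasEntrywiseDerivAt_entrywiseDeriv (hf : EntrywiseContDiffOn 2 f S) (hS : IsOpen S)
    {x : ℝ} (hx : x ∈ S) :
    HasEntrywiseDerivAt (entrywiseDeriv f) (entrywiseDeriv (entrywiseDeriv f) x) x :=
  (hf.entrywiseDeriv_of_isOpen hS (k' := 1) (by norm_num)).hasEntrywiseDerivAt hS one_ne_zero hx

theorem continuousOn_entrywiseDeriv_entrywiseDeriv (hf : EntrywiseContDiffOn 2 f S)
    (hS : IsOpen S) : ContinuousOn (entrywiseDeriv (entrywiseDeriv f)) S :=
  (hf.entrywiseDeriv_of_isOpen hS (k' := 1) (by norm_num)).continuousOn_entrywiseDeriv hS le_rfl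

end EntrywiseContDiffOn

end EntrywiseCalculus

noncomputable section SecondOrderOperator

variable {𝕜 m n : Type*} [RCLike 𝕜] [Fintype n]

def secondOrderOp (A B Q : ℝ → Matrix n n 𝕜) (F : ℝ → Matrix n m 𝕜) (x : ℝ) : Matrix n m 𝕜 :=
  (1/2 : 𝕜) • (A x * entrywiseDeriv (entrywiseDeriv F) x) + B x * entrywiseDeriv F x + Q x * F x

structure SymmetryEquations (W A B Q : ℝ → Matrix n n 𝕜) (S : Set ℝ) : Prop where
  second_order : ∀ x ∈ S, (A x)ᴴ * W x = W x * A x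
  first_order : ∀ x ∈ S, (B x)ᴴ * W x = entrywiseDeriv (fun y => W y * A y) x - W x * B x
  zeroth_order : ∀ x ∈ S, (Q x)ᴴ * W x
    = (1/2 : 𝕜) • entrywiseDeriv (entrywiseDeriv fun y => W y * A y) x
      - entrywiseDeriv (fun y => W y * B y) x + W x * Q x

/-- The bilinear concomitant of `𝒜`, written with `M = W A` and `P = W B`. -/
def concomitant (M P : ℝ → Matrix n n 𝕜) (F G : ℝ → Matrix n m 𝕜) (x : ℝ) : Matrix m m 𝕜 :=
  (1/2 : 𝕜) • ((entrywiseDeriv G x)ᴴ * M x * F x - (G x)ᴴ * M x * entrywiseDeriv F x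
    + (G x)ᴴ * entrywiseDeriv M x * F x) - (G x)ᴴ * P x * F x

theorem conjTranspose_mul_mul_secondOrder (g : Matrix n m 𝕜) (w a b q : Matrix n n 𝕜)
    (f f' f'' : Matrix n m 𝕜) :
    gᴴ * w * ((1/2 : 𝕜) • (a * f'') + b * f' + q * f)
      = (1/2 : 𝕜) • (gᴴ * (w * a) * f'') + gᴴ * (w * b) * f' + gᴴ * (w * q) * f := by
  simp only [Matrix.mul_add, Matrix.mul_smul, Matrix.mul_assoc]

theorem secondOrder_conjTranspose_mul_mul (f : Matrix n m 𝕜) (w a b q : Matrix n n 𝕜)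
    (g g' g'' : Matrix n m 𝕜) :
    ((1/2 : 𝕜) • (a * g'') + b * g' + q * g)ᴴ * w * f
      = (1/2 : 𝕜) • (g''ᴴ * (aᴴ * w) * f) + g'ᴴ * (bᴴ * w) * f + gᴴ * (qᴴ * w) * f := by
  simp only [one_div, conjTranspose_add, conjTranspose_smul, star_inv₀, star_ofNat,
    conjTranspose_mul, Matrix.add_mul, smul_mul, Matrix.mul_assoc]

theorem secondOrder_lagrange_identity {w a b q m' m'' p' : Matrix n n 𝕜}
    (f f' f'' g g' g'' : Matrix n m 𝕜) (h₁ : aᴴ * w = w * a) (h₂ : bᴴ * w = m' - w * b)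
    (h₃ : qᴴ * w = (1/2 : 𝕜) • m'' - p' + w * q) :
    ((1/2 : 𝕜) • (a * g'') + b * g' + q * g)ᴴ * w * f
        - gᴴ * w * ((1/2 : 𝕜) • (a * f'') + b * f' + q * f)
      = (1/2 : 𝕜) • (g''ᴴ * (w * a) * f) + g'ᴴ * (m' - w * b) * f
        + gᴴ * ((1/2 : 𝕜) • m'' - p') * f - (1/2 : 𝕜) • (gᴴ * (w * a) * f'')
        - gᴴ * (w * b) * f' := by
  rw [secondOrder_conjTranspose_mul_mul, conjTranspose_mul_mul_secondOrder, h₁, h₂, h₃]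
  simp only [Matrix.mul_add, Matrix.add_mul]
  abel

variable {S : Set ℝ} {W A B Q M P : ℝ → Matrix n n 𝕜} {F G : ℝ → Matrix n m 𝕜}

theorem hasEntrywiseDerivAt_concomitant (hS : IsOpen S) (hM : EntrywiseContDiffOn 2 M S)
    (hP : EntrywiseContDiffOn 1 P S) (hF : EntrywiseContDiffOn 2 F S)
    (hG : EntrywiseContDiffOn 2 G S) {x : ℝ} (hx : x ∈ S) :
    HasEntrywiseDerivAt (concomitant M P F G)
      ((1/2 : 𝕜) • ((entrywiseDeriv (entrywiseDeriv G) x)ᴴ * M x * F x)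
        + (entrywiseDeriv G x)ᴴ * (entrywiseDeriv M x - P x) * F x
        + (G x)ᴴ * ((1/2 : 𝕜) • entrywiseDeriv (entrywiseDeriv M) x - entrywiseDeriv P x) * F x
        - (1/2 : 𝕜) • ((G x)ᴴ * M x * entrywiseDeriv (entrywiseDeriv F) x)
        - (G x)ᴴ * P x * entrywiseDeriv F x) x := by
  have hM₁ := hM.hasEntrywiseDerivAt hS two_ne_zero hx
  have hM₂ := hM.hasEntrywiseDerivAt_entrywiseDeriv hS hx
  have hP₁ := hP.hasEntrywiseDerivAt hS one_ne_zero hx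
  have hF₁ := hF.hasEntrywiseDerivAt hS two_ne_zero hx
  have hF₂ := hF.hasEntrywiseDerivAt_entrywiseDeriv hS hx
  have hG₁ := hG.hasEntrywiseDerivAt hS two_ne_zero hx
  have hG₂ := hG.hasEntrywiseDerivAt_entrywiseDeriv hS hx
  have h := ((((hG₂.conjTranspose.mul hM₁).mul hF₁).sub ((hG₁.conjTranspose.mul hM₁).mul hF₂)).add
    ((hG₁.conjTranspose.mul hM₂).mul hF₁)).const_smul (1/2 : 𝕜) |>.sub
    ((hG₁.conjTranspose.mul hP₁).mul hF₁)
  refine h.congr_deriv ?_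
  simp only [Matrix.add_mul, Matrix.mul_sub, Matrix.sub_mul, Matrix.mul_smul, Matrix.smul_mul,
    smul_add, smul_sub, Matrix.mul_assoc]
  module

theorem concomitant_eq_zero_of_notMem_tsupport {x : ℝ} (hx : x ∉ tsupport F) :
    concomitant M P F G x = 0 := by
  simp [concomitant, image_eq_zero_of_notMem_tsupport hx,
    entrywiseDeriv_eq_zero_of_notMem_tsupport hx]

theorem secondOrderOp_eq_zero_of_notMem_tsupport {x : ℝ} (hx : x ∉ tsupport F) :
    secondOrderOp A B Q F x = 0 := by
  have hx' : x ∉ tsupport (entrywiseDeriv F) := fun h => hx (tsupport_entrywiseDeriv_subset F h)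
  simp [secondOrderOp, image_eq_zero_of_notMem_tsupport hx,
    entrywiseDeriv_eq_zero_of_notMem_tsupport hx, entrywiseDeriv_eq_zero_of_notMem_tsupport hx']

theorem continuousOn_conjTranspose_mul_mul_secondOrderOp (hS : IsOpen S)
    (hM : ContinuousOn (fun x => W x * A x) S) (hP : ContinuousOn (fun x => W x * B x) S)
    (hV : ContinuousOn (fun x => W x * Q x) S) (hF : EntrywiseContDiffOn 2 F S)
    (hG : ContinuousOn G S) :
    ContinuousOn (fun x => (G x)ᴴ * W x * secondOrderOp A B Q F x) S := by
  have hF₁ := hF.continuousOn_entrywiseDeriv hS one_le_two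
  have hF₂ := hF.continuousOn_entrywiseDeriv_entrywiseDeriv hS
  have hF₀ := hF.continuousOn
  simp only [secondOrderOp, conjTranspose_mul_mul_secondOrder]
  fun_prop

theorem SymmetryEquations.continuousOn_secondOrderOp_conjTranspose_mul_mul
    (hsym : SymmetryEquations W A B Q S) (hS : IsOpen S)
    (hM : EntrywiseContDiffOn 2 (fun x => W x * A x) S)
    (hP : EntrywiseContDiffOn 1 (fun x => W x * B x) S)
    (hV : ContinuousOn (fun x => W x * Q x) S) (hF : ContinuousOn F S)
    (hG : EntrywiseContDiffOn 2 G S) :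
    ContinuousOn (fun x => (secondOrderOp A B Q G x)ᴴ * W x * F x) S := by
  have hM₀ := hM.continuousOn
  have hM₁ := hM.continuousOn_entrywiseDeriv hS one_le_two
  have hM₂ := hM.continuousOn_entrywiseDeriv_entrywiseDeriv hS
  have hP₀ := hP.continuousOn
  have hP₁ := hP.continuousOn_entrywiseDeriv hS le_rfl
  have hG₀ := hG.continuousOn
  have hG₁ := hG.continuousOn_entrywiseDeriv hS one_le_two
  have hG₂ := hG.continuousOn_entrywiseDeriv_entrywiseDeriv hS
  refine ContinuousOn.congr (f := fun x =>
    (1/2 : 𝕜) • ((entrywiseDeriv (entrywiseDeriv G) x)ᴴ * (W x * A x) * F x)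
      + (entrywiseDeriv G x)ᴴ * (entrywiseDeriv (fun y => W y * A y) x - W x * B x) * F x
      + (G x)ᴴ * ((1/2 : 𝕜) • entrywiseDeriv (entrywiseDeriv fun y => W y * A y) x
        - entrywiseDeriv (fun y => W y * B y) x + W x * Q x) * F x) (by fun_prop) fun x hx => ?_
  simp only [secondOrderOp, secondOrder_conjTranspose_mul_mul, hsym.second_order x hx,
    hsym.first_order x hx, hsym.zeroth_order x hx]

theorem SymmetryEquations.setIntegral_conjTranspose_mul_mul_secondOrderOp
    (hsym : SymmetryEquations W A B Q S) (hS : IsOpen S)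
    (hM : EntrywiseContDiffOn 2 (fun x => W x * A x) S)
    (hP : EntrywiseContDiffOn 1 (fun x => W x * B x) S)
    (hV : ContinuousOn (fun x => W x * Q x) S) (hF : EntrywiseContDiffOn 2 F S)
    (hG : EntrywiseContDiffOn 2 G S) (hFc : HasCompactSupport F) (hFS : tsupport F ⊆ S)
    (i j : m) :
    ∫ x in S, ((G x)ᴴ * W x * secondOrderOp A B Q F x) i j
      = ∫ x in S, ((secondOrderOp A B Q G x)ᴴ * W x * F x) i j := by
  refine setIntegral_eq_of_hasDerivAt_sub
    (φ := fun x => concomitant (fun y => W y * A y) (fun y => W y * B y) F G x i j)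
    hS.measurableSet hFc hFS (fun x hx => by rw [concomitant_eq_zero_of_notMem_tsupport hx]; rfl)
    (fun x hx => ?_) ?_ ?_
  · have h := hasEntrywiseDerivAt_concomitant hS hM hP hF hG hx
    rw [← secondOrder_lagrange_identity _ _ _ _ _ _ (hsym.second_order x hx)
      (hsym.first_order x hx) (hsym.zeroth_order x hx)] at h
    exact h i j
  · refine (continuousOn_matrix_iff.1 ?_ i j).integrableOn_of_forall_notMem_eq_zero
      hS.measurableSet hFc hFS fun x hx => by simp [secondOrderOp_eq_zero_of_notMem_tsupport hx]
    exact continuousOn_conjTranspose_mul_mul_secondOrderOp hS hM.continuousOn hP.continuousOn hV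
      hF hG.continuousOn
  · refine (continuousOn_matrix_iff.1 ?_ i j).integrableOn_of_forall_notMem_eq_zero
      hS.measurableSet hFc hFS fun x hx => by simp [image_eq_zero_of_notMem_tsupport hx]
    exact hsym.continuousOn_secondOrderOp_conjTranspose_mul_mul hS hM hP hV hF.continuousOn hG

end SecondOrderOperator

theorem stmt_5_general (N : ℕ) (a b : ℝ) (S : Set ℝ) (hS : S = Set.Ioo a b)
    (W A B Q : ℝ → Matrix (Fin N) (Fin N) ℂ)
    (hWA : ∀ i j, ContDiffOn ℝ 2 (fun y => (W y * A y) i j) S)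
    (hWB : ∀ i j, ContDiffOn ℝ 1 (fun y => (W y * B y) i j) S)
    (hW : ∀ i j, ContinuousOn (fun y => W y i j) S)
    (hQ : ∀ i j, ContinuousOn (fun y => Q y i j) S)
    (hsym1 : ∀ x ∈ S, (A x)ᴴ * W x = W x * A x)
    (hsym2 : ∀ x ∈ S, (B x)ᴴ * W x
      = (Matrix.of fun i j => deriv (fun y => (W y * A y) i j) x) - W x * B x)
    (hsym3 : ∀ x ∈ S, (Q x)ᴴ * W x
      = (1/2 : ℂ) • (Matrix.of fun i j => deriv (deriv fun y => (W y * A y) i j) x)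
        - (Matrix.of fun i j => deriv (fun y => (W y * B y) i j) x) + W x * Q x)
    (F G : ℝ → Matrix (Fin N) (Fin N) ℂ)
    (hF : ∀ i j, ContDiff ℝ 2 (fun y => F y i j))
    (hG : ∀ i j, ContDiff ℝ 2 (fun y => G y i j))
    (hFsupp : HasCompactSupport F) (hFS : tsupport F ⊆ S) :
    ∀ i j,
      (∫ x in S, ((G x)ᴴ * W x *
        ((1/2 : ℂ) • (A x * Matrix.of fun p q => deriv (deriv fun z => F z p q) x)
          + B x * (Matrix.of fun p q => deriv (fun z => F z p q) x)
          + Q x * F x)) i j)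
      = ∫ x in S,
          (((1/2 : ℂ) • (A x * Matrix.of fun p q => deriv (deriv fun z => G z p q) x)
            + B x * (Matrix.of fun p q => deriv (fun z => G z p q) x)
            + Q x * G x)ᴴ * W x * F x) i j :=
  (SymmetryEquations.mk hsym1 hsym2 hsym3).setIntegral_conjTranspose_mul_mul_secondOrderOp
    (hS ▸ isOpen_Ioo) hWA hWB
    ((continuousOn_matrix_iff.2 hW).matrix_mul (continuousOn_matrix_iff.2 hQ))
    (fun p q => (hF p q).contDiffOn) (fun p q => (hG p q).contDiffOn) hFsupp hFS

/-- If the coefficients of `𝒜F = ½ A F'' + B F' + Q F` satisfy the symmetry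
equations with respect to the weight matrix `W`, then `𝒜` is formally
self-adjoint with respect to the matrix-valued inner product
`⟨F,G⟩_W = ∫_S G* W F`. -/
theorem stmt_5 (N : ℕ) (a b : ℝ) (S : Set ℝ) (hS : S = Set.Ioo a b)
    (W A B Q : ℝ → Matrix (Fin N) (Fin N) ℂ)
    (hWA : ∀ i j, ContDiffOn ℝ 2 (fun y => (W y * A y) i j) S)
    (hWB : ∀ i j, ContDiffOn ℝ 1 (fun y => (W y * B y) i j) S)
    (hW : ∀ i j, ContinuousOn (fun y => W y i j) S)
    (hQ : ∀ i j, ContinuousOn (fun y => Q y i j) S)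
    (hsym1 : ∀ x ∈ S, (A x)ᴴ * W x = W x * A x)
    (hsym2 : ∀ x ∈ S, (B x)ᴴ * W x
      = (Matrix.of fun i j => deriv (fun y => (W y * A y) i j) x) - W x * B x)
    (hsym3 : ∀ x ∈ S, (Q x)ᴴ * W x
      = (1/2 : ℂ) • (Matrix.of fun i j => deriv (deriv fun y => (W y * A y) i j) x)
        - (Matrix.of fun i j => deriv (fun y => (W y * B y) i j) x) + W x * Q x)
    (F G : ℝ → Matrix (Fin N) (Fin N) ℂ)
    (hF : ∀ i j, ContDiff ℝ 2 (fun y => F y i j))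
    (hG : ∀ i j, ContDiff ℝ 2 (fun y => G y i j))
    (hFsupp : HasCompactSupport F) (hFS : tsupport F ⊆ S)
    (hGsupp : HasCompactSupport G) (hGS : tsupport G ⊆ S) :
    ∀ i j,
      (∫ x in S, ((G x)ᴴ * W x *
        ((1/2 : ℂ) • (A x * Matrix.of fun p q => deriv (deriv fun z => F z p q) x)
          + B x * (Matrix.of fun p q => deriv (fun z => F z p q) x)
          + Q x * F x)) i j)
      = ∫ x in S,
          (((1/2 : ℂ) • (A x * Matrix.of fun p q => deriv (deriv fun z => G z p q) x)
            + B x * (Matrix.of fun p q => deriv (fun z => G z p q) x)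
            + Q x * G x)ᴴ * W x * F x) i j :=
  stmt_5_general N a b S hS W A B Q hWA hWB hW hQ hsym1 hsym2 hsym3 F G hF hG hFsupp hFS
end

section
/- Let S = (a,b) ⊆ ℝ be an open interval and let W, A, B, Q : S → Matrix N N ℂ satisfy on S the symmetry equations A(x)* W(x) = W(x) A(x), B(x)* W(x) = (W A)'(x) − W(x) B(x), Q(x)* W(x) = ½ (W A)''(x) − (W B)'(x) + W(x) Q(x), with W·A twice differentiable and W·B differentiable on S. Assume moreover Q(x)·e = 0 for every x ∈ S, where e is the all-ones column vector. Then the row-vector-valued function ψ(y) := e* W(y) satisfies the stationary forward (Fokker–Planck) equation ½ (ψ A)''(y) − (ψ B)'(y) + ψ(y) Q(y) = 0 for all y ∈ S. -/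
open MeasureTheory Filter Topology Matrix

/-- If `W, A, B, Q` satisfy the symmetry equations and `Q(x)·e = 0`, then the
row vector `ψ(y) = e* W(y)` satisfies the stationary Fokker–Planck equation
`½ (ψA)'' − (ψB)' + ψQ = 0`. -/
theorem stmt_6 (N : ℕ) (a b : ℝ) (S : Set ℝ) (hS : S = Set.Ioo a b)
    (W A B Q : ℝ → Matrix (Fin N) (Fin N) ℂ)
    (hWA : ∀ i j, ∀ x ∈ S, DifferentiableAt ℝ (fun y => (W y * A y) i j) x
      ∧ DifferentiableAt ℝ (deriv fun y => (W y * A y) i j) x)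
    (hWB : ∀ i j, ∀ x ∈ S, DifferentiableAt ℝ (fun y => (W y * B y) i j) x)
    (hsym1 : ∀ x ∈ S, (A x)ᴴ * W x = W x * A x)
    (hsym2 : ∀ x ∈ S, (B x)ᴴ * W x
      = (Matrix.of fun i j => deriv (fun y => (W y * A y) i j) x) - W x * B x)
    (hsym3 : ∀ x ∈ S, (Q x)ᴴ * W x
      = (1/2 : ℂ) • (Matrix.of fun i j => deriv (deriv fun y => (W y * A y) i j) x)
        - (Matrix.of fun i j => deriv (fun y => (W y * B y) i j) x) + W x * Q x)
    (hQe : ∀ x ∈ S, (Q x) *ᵥ (fun _ => (1 : ℂ)) = 0) :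
    ∀ y ∈ S, ∀ j : Fin N,
      (1/2 : ℂ) * deriv (deriv fun z => ∑ l, (∑ i, W z i l) * A z l j) y
        - deriv (fun z => ∑ l, (∑ i, W z i l) * B z l j) y
        + ∑ l, (∑ i, W y i l) * Q y l j = 0 := by
  intro y hy j
  have hSopen : IsOpen S := hS ▸ isOpen_Ioo
  have hmem : S ∈ 𝓝 y := hSopen.mem_nhds hy
  have hA : (fun z => ∑ l, (∑ i, W z i l) * A z l j)
      = fun z => ∑ i, (W z * A z) i j := by
    funext z
    simp only [Finset.sum_mul, Matrix.mul_apply]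
    exact Finset.sum_comm
  have hB : (fun z => ∑ l, (∑ i, W z i l) * B z l j)
      = fun z => ∑ i, (W z * B z) i j := by
    funext z
    simp only [Finset.sum_mul, Matrix.mul_apply]
    exact Finset.sum_comm
  have hQ : ∑ l, (∑ i, W y i l) * Q y l j = ∑ i, (W y * Q y) i j := by
    simp only [Finset.sum_mul, Matrix.mul_apply]
    exact Finset.sum_comm
  rw [hA, hB, hQ]
  have hderivA : (deriv fun z => ∑ i, (W z * A z) i j)
      =ᶠ[𝓝 y] fun z => ∑ i, deriv (fun w => (W w * A w) i j) z := by
    filter_upwards [hmem] with x hx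
    exact deriv_fun_sum fun i _ => (hWA i j x hx).1
  have h2A : deriv (deriv fun z => ∑ i, (W z * A z) i j) y
      = ∑ i, deriv (deriv fun w => (W w * A w) i j) y := by
    rw [hderivA.deriv_eq]
    exact deriv_fun_sum fun i _ => (hWA i j y hy).2
  have h1B : deriv (fun z => ∑ i, (W z * B z) i j) y
      = ∑ i, deriv (fun w => (W w * B w) i j) y :=
    deriv_fun_sum fun i _ => hWB i j y hy
  rw [h2A, h1B]
  have h3 := hsym3 y hy
  have hentry : ∀ i, ((Q y)ᴴ * W y) i j
      = (1/2 : ℂ) * deriv (deriv fun w => (W w * A w) i j) y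
        - deriv (fun w => (W w * B w) i j) y + (W y * Q y) i j := by
    intro i
    have := congrFun (congrFun h3 i) j
    simpa [Matrix.sub_apply, Matrix.add_apply, Matrix.smul_apply,
      Matrix.of_apply, smul_eq_mul] using this
  have hsum : ∑ i, ((Q y)ᴴ * W y) i j = 0 := by
    have hq : ∀ k, ∑ i, Q y k i = 0 := by
      intro k
      have := congrFun (hQe y hy) k
      simpa [Matrix.mulVec, dotProduct] using this
    simp only [Matrix.mul_apply, Matrix.conjTranspose_apply]
    rw [Finset.sum_comm]
    have hz : ∀ k : Fin N, ∑ i, (starRingEnd ℂ) (Q y k i) = 0 := fun k => by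
      rw [← map_sum, hq]; simp
    simp [← Finset.sum_mul, hz]
  have hmain : (1/2 : ℂ) * (∑ i, deriv (deriv fun w => (W w * A w) i j) y)
      - (∑ i, deriv (fun w => (W w * B w) i j) y) + ∑ i, (W y * Q y) i j
      = ∑ i, ((Q y)ᴴ * W y) i j := by
    rw [Finset.mul_sum, ← Finset.sum_sub_distrib, ← Finset.sum_add_distrib]
    exact Finset.sum_congr rfl fun i _ => (hentry i).symm
  rw [hmain, hsum]
end

section
/- Let S ⊆ ℝ be an open interval, let A, B, Q : S → Matrix N N ℂ, let Γ and M be constant N×N complex matrices, and let Φ : S → Matrix N N ℂ be twice differentiable with ½ A(x) Φ''(x) + B(x) Φ'(x) + Q(x) Φ(x) = Φ(x) Γ for all x ∈ S. Define U(t,x) := Φ(x) · exp(tΓ) · M. Then U satisfies the backward differential equation ∂U/∂t(t,x) = ½ A(x) ∂²U/∂x²(t,x) + B(x) ∂U/∂x(t,x) + Q(x) U(t,x) for all t ∈ ℝ and x ∈ S, with initial condition U(0,x) = Φ(x) M. -/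
/-!
The operator `½A d²/dx² + B d/dx + Q` acts on `U(t, ·) = Φ · (e^{tΓ} M)` through `Φ` alone, so it
sends `U` to `Φ Γ e^{tΓ} M` by the eigen-equation; and `∂ₜ e^{tΓ} = Γ e^{tΓ}` gives the same
matrix as the time derivative.
-/

open Filter Topology

section EntrywiseDerivative

variable {𝕜 𝔸 : Type*} [NontriviallyNormedField 𝕜] [NormedRing 𝔸] [NormedAlgebra 𝕜 𝔸]
  {l m n : Type*} [Fintype m]

theorem hasDerivAt_matrix_mul_const_apply {F : 𝕜 → Matrix l m 𝔸} {F' : Matrix l m 𝔸} {x : 𝕜}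
    (hF : ∀ i j, HasDerivAt (fun z => F z i j) (F' i j) x) (C : Matrix m n 𝔸) (i : l) (j : n) :
    HasDerivAt (fun z => (F z * C) i j) ((F' * C) i j) x := by
  simp only [Matrix.mul_apply]
  exact HasDerivAt.fun_sum fun k _ => (hF i k).mul_const (C k j)

theorem hasDerivAt_const_matrix_mul_apply (C : Matrix l m 𝔸) {F : 𝕜 → Matrix m n 𝔸}
    {F' : Matrix m n 𝔸} {x : 𝕜} (hF : ∀ i j, HasDerivAt (fun z => F z i j) (F' i j) x)
    (i : l) (j : n) :
    HasDerivAt (fun z => (C * F z) i j) ((C * F') i j) x := by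
  simp only [Matrix.mul_apply]
  exact HasDerivAt.fun_sum fun k _ => (hF k j).const_mul (C i k)

theorem of_deriv_matrix_mul_const {F : 𝕜 → Matrix l m 𝔸} {F' : Matrix l m 𝔸} {x : 𝕜}
    (hF : ∀ i j, HasDerivAt (fun z => F z i j) (F' i j) x) (C : Matrix m n 𝔸) :
    Matrix.of (fun i j => deriv (fun z => (F z * C) i j) x) = F' * C := by
  ext i j
  exact (hasDerivAt_matrix_mul_const_apply hF C i j).deriv

theorem of_deriv_deriv_matrix_mul_const {F F' : 𝕜 → Matrix l m 𝔸} {F'' : Matrix l m 𝔸}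
    {S : Set 𝕜} {x : 𝕜} (hS : S ∈ 𝓝 x)
    (hF : ∀ z ∈ S, ∀ i j, HasDerivAt (fun w => F w i j) (F' z i j) z)
    (hF' : ∀ i j, HasDerivAt (fun z => F' z i j) (F'' i j) x) (C : Matrix m n 𝔸) :
    Matrix.of (fun i j => deriv (deriv fun z => (F z * C) i j) x) = F'' * C := by
  ext i j
  have hderiv : deriv (fun z => (F z * C) i j) =ᶠ[𝓝 x] fun z => (F' z * C) i j := by
    filter_upwards [hS] with z hz
    exact (hasDerivAt_matrix_mul_const_apply (hF z hz) C i j).deriv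
  rw [Matrix.of_apply, hderiv.deriv_eq]
  exact (hasDerivAt_matrix_mul_const_apply hF' C i j).deriv

end EntrywiseDerivative

section MatrixExp

/- Matrices carry no global norm; any normed-algebra structure inducing the entrywise topology
serves, since the conclusion only concerns entries. -/
attribute [local instance] Matrix.linftyOpNormedRing Matrix.linftyOpNormedAlgebra

theorem hasDerivAt_exp_ofReal_smul_apply {n : Type*} [Fintype n] [DecidableEq n]
    (Γ : Matrix n n ℂ) (t : ℝ) (i j : n) :
    HasDerivAt (fun s : ℝ => NormedSpace.exp ((s : ℂ) • Γ) i j)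
      ((Γ * NormedSpace.exp ((t : ℂ) • Γ)) i j) t := by
  have hexp : HasDerivAt (fun s : ℝ => NormedSpace.exp (s • Γ))
      (Γ * NormedSpace.exp (t • Γ)) t :=
    hasDerivAt_exp_smul_const' Γ t
  simp only [Complex.coe_smul]
  exact (Matrix.entryLinearMap ℝ ℂ i j).toContinuousLinearMap.hasFDerivAt.comp_hasDerivAt t hexp

end MatrixExp

/-- If `Φ` is a matrix-valued eigenfunction of `𝒜 = ½A d²/dx² + B d/dx + Q` with
eigenvalue `Γ`, then `U(t,x) = Φ(x) e^{tΓ} M` solves the backward equation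
`∂U/∂t = 𝒜U` with `U(0,x) = Φ(x) M`. -/
theorem stmt_7 (N : ℕ) (a b : ℝ) (S : Set ℝ) (hS : S = Set.Ioo a b)
    (A B Q : ℝ → Matrix (Fin N) (Fin N) ℂ)
    (Γ M : Matrix (Fin N) (Fin N) ℂ)
    (Φ Φ' Φ'' : ℝ → Matrix (Fin N) (Fin N) ℂ)
    (hΦ : ∀ x ∈ S, ∀ i j, HasDerivAt (fun z => Φ z i j) (Φ' x i j) x)
    (hΦ' : ∀ x ∈ S, ∀ i j, HasDerivAt (fun z => Φ' z i j) (Φ'' x i j) x)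
    (heig : ∀ x ∈ S,
      (1/2 : ℂ) • (A x * Φ'' x) + B x * Φ' x + Q x * Φ x = Φ x * Γ)
    (U : ℝ → ℝ → Matrix (Fin N) (Fin N) ℂ)
    (hU : ∀ t x, U t x = Φ x * NormedSpace.exp ((t : ℂ) • Γ) * M) :
    (∀ t : ℝ, ∀ x ∈ S, ∀ i j,
      HasDerivAt (fun s : ℝ => U s x i j)
        (((1/2 : ℂ) • (A x * Matrix.of fun p q => deriv (deriv fun z => U t z p q) x)
          + B x * (Matrix.of fun p q => deriv (fun z => U t z p q) x)
          + Q x * U t x) i j) t)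
    ∧ ∀ x : ℝ, U 0 x = Φ x * M := by
  refine ⟨fun t x hx i j => ?_, fun x => by simp [hU]⟩
  set E := NormedSpace.exp ((t : ℂ) • Γ)
  have hS_nhds : S ∈ 𝓝 x := by subst hS; exact isOpen_Ioo.mem_nhds hx
  have hUt : U t = fun z => Φ z * (E * M) := funext fun z => by rw [hU, mul_assoc]
  have hUx : (fun s => U s x i j) = fun s : ℝ => (Φ x * NormedSpace.exp ((s : ℂ) • Γ) * M) i j :=
    funext fun s => by rw [hU]
  have hgenerator : (1/2 : ℂ) • (A x * (Φ'' x * (E * M))) + B x * (Φ' x * (E * M))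
      + Q x * (Φ x * (E * M)) = Φ x * (Γ * E) * M := by
    calc _ = ((1/2 : ℂ) • (A x * Φ'' x) + B x * Φ' x + Q x * Φ x) * (E * M) := by
          simp only [add_mul, Matrix.smul_mul, mul_assoc]
      _ = Φ x * (Γ * E) * M := by rw [heig x hx]; simp only [mul_assoc]
  rw [hUt, of_deriv_deriv_matrix_mul_const hS_nhds hΦ (hΦ' x hx),
    of_deriv_matrix_mul_const (hΦ x hx), hgenerator, hUx]
  exact hasDerivAt_matrix_mul_const_apply
    (hasDerivAt_const_matrix_mul_apply (Φ x) (hasDerivAt_exp_ofReal_smul_apply Γ t)) M i j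
end

section
/- With N ≥ 1, α, β > −1, 0 < k < β+1, define for each integer n ≥ 0 and each j with 1 ≤ j ≤ N the real number γ_{n,j} = −n² − n(α+β+N+j−1) − (j−1)(α+β−k+j), which is the (j,j) diagonal entry of the eigenvalue matrix Γ_n = −n²I − n((α+β+N)I + J̆) − J̆((α+β−k+1)I + J̆). Then γ_{0,1} = 0, and γ_{n,j} < 0 for every pair (n,j) ≠ (0,1) with n ≥ 0 and 1 ≤ j ≤ N. -/
/-- The diagonal entries `γ_{n,j}` of the eigenvalue matrices
`Γ_n = −n²I − n((α+β+N)I + J̆) − J̆((α+β−k+1)I + J̆)` satisfy `γ_{0,1} = 0` and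
`γ_{n,j} < 0` for every `(n,j) ≠ (0,1)`. (Indices are 0-based: the entry
`j : Fin N` corresponds to the phase `j+1` of the paper, so `γ n j` here is the
paper's `γ_{n,j+1} = −n² − n(α+β+N+j) − j(α+β−k+1+j)`.) -/
theorem stmt_14 (N : ℕ) (hN : 1 ≤ N) (α β k : ℝ)
    (hα : -1 < α) (hβ : -1 < β) (hk : 0 < k) (hk' : k < β + 1)
    (γ : ℕ → Fin N → ℝ)
    (hγ : ∀ n : ℕ, ∀ j : Fin N, γ n j =
      -(n : ℝ)^2 - (n : ℝ) * (α + β + N + ((j : ℕ) : ℝ))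
        - ((j : ℕ) : ℝ) * (α + β - k + 1 + ((j : ℕ) : ℝ))) :
    (∀ j : Fin N, (j : ℕ) = 0 → γ 0 j = 0)
    ∧ (∀ n : ℕ, ∀ j : Fin N, ¬(n = 0 ∧ (j : ℕ) = 0) → γ n j < 0) := by
  have hNr : (1 : ℝ) ≤ (N : ℝ) := by exact_mod_cast hN
  constructor
  · intro j hj
    rw [hγ, hj]
    norm_num
  · intro n j hnj
    rw [hγ]
    have hjr : (0 : ℝ) ≤ ((j : ℕ) : ℝ) := Nat.cast_nonneg _
    have hnr : (0 : ℝ) ≤ (n : ℝ) := Nat.cast_nonneg _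
    rcases Nat.eq_zero_or_pos n with hn | hn
    · have hj0 : (j : ℕ) ≠ 0 := fun h => hnj ⟨hn, h⟩
      have hj1 : (1 : ℝ) ≤ ((j : ℕ) : ℝ) := by
        exact_mod_cast Nat.one_le_iff_ne_zero.mpr hj0
      subst hn
      push_cast
      nlinarith [hj1, hα, hβ, hk']
    · have hn1 : (1 : ℝ) ≤ (n : ℝ) := by exact_mod_cast hn
      rcases Nat.eq_zero_or_pos (j : ℕ) with hj | hj
      · rw [hj]; push_cast; nlinarith
      · have hj1 : (1 : ℝ) ≤ ((j : ℕ) : ℝ) := by exact_mod_cast hj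
        nlinarith [mul_nonneg hjr (by linarith : (0:ℝ) ≤ α + β - k + 1 + ((j:ℕ):ℝ))]
end

section
/- With N ≥ 1, α, β > −1, 0 < k < β+1, set ω_m = ((β−k+1)_{m−1}/(m−1)!)·((k)_{N−m}/(N−m)!) for 1 ≤ m ≤ N. Then Σ_{m=1}^{N} ω_m · ∫₀¹ y^{α+N−m} (1−y)^β dy = (α+β−k+2)_{N−1} · Γ(α+1) · Γ(β+N) / ((N−1)! · Γ(α+β+N+1)). Equivalently, Σ_{m=1}^{N} ω_m · B(α+N−m+1, β+1) equals the stated right-hand side, where B is the Beta function; this is the normalizing constant identity showing that the invariant distribution of the process has components ψ_j(y) = y^{α+N−j}(1−y)^β · C(N−1, j−1) · (Γ(α+β+N+1)/(Γ(α+1)Γ(β+N+1))) · (β+N)(k)_{N−j}(β−k+1)_{j−1}/(α+β−k+2)_{N−1}. -/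
/-!
With `j = N - 1 - m`, each integral is the Beta value `B(α + 1 + j, β + 1)`, and
`Γ(x + j) = (x)_j Γ(x)` turns it into `B(α + 1, β + 1) (α + 1)_j / (α + β + 2)_j`. The sum
then becomes a terminating balanced `₃F₂` at `1`, which the Pfaff–Saalschütz identity
evaluates. That identity is proved in its polynomial form, valid over any commutative ring,
by creative telescoping in `n`.
-/

open Polynomial Finset

section Pochhammer

variable {R : Type*} [CommSemiring R]

theorem ascPochhammer_succ_eval_left (n : ℕ) (x : R) :
    (ascPochhammer R (n + 1)).eval x = x * (ascPochhammer R n).eval (x + 1) := by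
  simp [ascPochhammer_succ_left, eval_comp]

theorem ascPochhammer_add_eval (m n : ℕ) (x : R) :
    (ascPochhammer R (m + n)).eval x =
      (ascPochhammer R m).eval x * (ascPochhammer R n).eval (x + m) := by
  simp [← ascPochhammer_mul, eval_comp]

end Pochhammer

section PfaffSaalschutz

variable {R : Type*} [CommRing R] (a b c : R)

noncomputable def saalschutzTerm (n j : ℕ) : R :=
  n.choose j * (ascPochhammer R j).eval a * (ascPochhammer R j).eval b *
    (ascPochhammer R (n - j)).eval (c - a - b) * (ascPochhammer R (n - j)).eval (c + j)

/-- Zeilberger's certificate: `saalschutzTerm (n + 1) j - (c-a+n)(c-b+n) saalschutzTerm n j` is a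
difference of consecutive values of it (`saalschutzTerm_succ_zero`, `saalschutzTerm_succ_succ`). -/
noncomputable def saalschutzCertificate (n j : ℕ) : R :=
  n.choose j * (ascPochhammer R (j + 1)).eval a * (ascPochhammer R (j + 1)).eval b *
    (ascPochhammer R (n - j)).eval (c - a - b) * (ascPochhammer R (n - j)).eval (c + j)

variable {a b c}

theorem saalschutzTerm_of_lt {n j : ℕ} (h : n < j) : saalschutzTerm a b c n j = 0 := by
  simp [saalschutzTerm, Nat.choose_eq_zero_of_lt h]

theorem saalschutzCertificate_of_lt {n j : ℕ} (h : n < j) :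
    saalschutzCertificate a b c n j = 0 := by
  simp [saalschutzCertificate, Nat.choose_eq_zero_of_lt h]

theorem saalschutzTerm_succ_zero (n : ℕ) :
    saalschutzTerm a b c (n + 1) 0 =
      (c - a + n) * (c - b + n) * saalschutzTerm a b c n 0 - saalschutzCertificate a b c n 0 := by
  simp only [saalschutzTerm, saalschutzCertificate, Nat.choose_zero_right, Nat.sub_zero,
    Nat.cast_zero, add_zero, ascPochhammer_succ_eval, zero_add, ascPochhammer_one, eval_X,
    ascPochhammer_zero, eval_one]
  ring

theorem saalschutzTerm_succ_succ {n i : ℕ} (hi : i ≤ n) :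
    saalschutzTerm a b c (n + 1) (i + 1) =
      (c - a + n) * (c - b + n) * saalschutzTerm a b c n (i + 1) +
        (saalschutzCertificate a b c n i - saalschutzCertificate a b c n (i + 1)) := by
  rcases hi.eq_or_lt with rfl | hi
  · rw [saalschutzTerm_of_lt (Nat.lt_succ_self i),
      saalschutzCertificate_of_lt (Nat.lt_succ_self i)]
    simp [saalschutzTerm, saalschutzCertificate]
  obtain ⟨e, rfl⟩ : ∃ e, n = i + 1 + e := ⟨n - (i + 1), by omega⟩
  have hchoose :
      ((i + 1 + e).choose (i + 1) : R) * (i + 1) = (i + 1 + e).choose i * (e + 1) := by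
    have := Nat.choose_succ_right_eq (i + 1 + e) i
    rw [show i + 1 + e - i = e + 1 by omega] at this
    exact_mod_cast congrArg (Nat.cast : ℕ → R) this
  simp only [saalschutzTerm, saalschutzCertificate, show i + 1 + e + 1 - (i + 1) = e + 1 by omega,
    show i + 1 + e - (i + 1) = e by omega, show i + 1 + e - i = e + 1 by omega,
    Nat.choose_succ_succ', Nat.cast_add, Nat.cast_one]
  rw [ascPochhammer_succ_eval (i + 1) a, ascPochhammer_succ_eval (i + 1) b,
    ascPochhammer_succ_eval e (c - a - b), ascPochhammer_succ_eval e (c + (i + 1)),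
    ascPochhammer_succ_eval_left e (c + i), add_assoc c (i : R) 1]
  push_cast
  linear_combination (-((ascPochhammer R (i + 1)).eval a * (ascPochhammer R (i + 1)).eval b *
    (ascPochhammer R e).eval (c - a - b) * (ascPochhammer R e).eval (c + (i + 1)) *
    (c - a - b + e))) * hchoose

theorem sum_saalschutzTerm (n : ℕ) :
    ∑ j ∈ range (n + 1), saalschutzTerm a b c n j =
      (ascPochhammer R n).eval (c - a) * (ascPochhammer R n).eval (c - b) := by
  induction n with
  | zero => simp [saalschutzTerm]
  | succ n ih =>
    have hsplit : ∑ j ∈ range (n + 1), saalschutzTerm a b c n j =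
        saalschutzTerm a b c n 0 + ∑ i ∈ range (n + 1), saalschutzTerm a b c n (i + 1) := by
      rw [sum_range_succ' _ n, sum_range_succ (fun i => saalschutzTerm a b c n (i + 1)) n,
        saalschutzTerm_of_lt (Nat.lt_succ_self n), add_zero, add_comm]
    rw [sum_range_succ', saalschutzTerm_succ_zero,
      sum_congr rfl fun i hi => saalschutzTerm_succ_succ (Nat.lt_succ_iff.mp (mem_range.mp hi)),
      sum_add_distrib, sum_range_sub', ← mul_sum,
      saalschutzCertificate_of_lt (Nat.lt_succ_self n), ascPochhammer_succ_eval,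
      ascPochhammer_succ_eval, Nat.succ_eq_add_one]
    rw [hsplit] at ih
    linear_combination (c - a + n) * (c - b + n) * ih

end PfaffSaalschutz

theorem ascPochhammer_pfaff_saalschutz {K : Type*} [Field K] [CharZero K] (a b c : K) (n : ℕ)
    (hc : (ascPochhammer K n).eval c ≠ 0) :
    ∑ m ∈ range (n + 1), (ascPochhammer K m).eval (c - a - b) / m.factorial *
        ((ascPochhammer K (n - m)).eval a / (n - m).factorial *
          ((ascPochhammer K (n - m)).eval b / (ascPochhammer K (n - m)).eval c)) =
      (ascPochhammer K n).eval (c - a) * (ascPochhammer K n).eval (c - b) /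
        (n.factorial * (ascPochhammer K n).eval c) := by
  rw [← sum_saalschutzTerm, ← sum_range_reflect, sum_div]
  refine sum_congr rfl fun m hm => ?_
  have hmn : m ≤ n := Nat.lt_succ_iff.mp (mem_range.mp hm)
  obtain ⟨j, rfl⟩ : ∃ j, n = m + j := ⟨n - m, by omega⟩
  simp only [Nat.add_sub_cancel_left, Nat.add_sub_cancel,
    saalschutzTerm, ascPochhammer_add_eval] at hc ⊢
  rw [← Nat.choose_mul_factorial_mul_factorial (Nat.le_add_right m j), Nat.add_sub_cancel_left]
  obtain ⟨hcm, hcj⟩ := mul_ne_zero_iff.mp hc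
  have hchoose : ((m + j).choose m : K) ≠ 0 :=
    Nat.cast_ne_zero.mpr (Nat.choose_pos (Nat.le_add_right m j)).ne'
  have := Nat.factorial_ne_zero j
  have := Nat.factorial_ne_zero m
  field_simp
  push_cast
  ring

theorem Real.Gamma_add_nat {x : ℝ} (hx : 0 < x) (n : ℕ) :
    Real.Gamma (x + n) = (ascPochhammer ℝ n).eval x * Real.Gamma x := by
  induction n with
  | zero => simp
  | succ n ih =>
    rw [Nat.cast_succ, ← add_assoc, Real.Gamma_add_one (by positivity), ih,
      ascPochhammer_succ_eval]
    ring

theorem integral_rpow_mul_one_sub_rpow {u v : ℝ} (hu : 0 < u) (hv : 0 < v) :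
    ∫ y in (0 : ℝ)..1, y ^ (u - 1) * (1 - y) ^ (v - 1) =
      Real.Gamma u * Real.Gamma v / Real.Gamma (u + v) := by
  have hbeta : Complex.betaIntegral u v =
      ↑(∫ y in (0 : ℝ)..1, y ^ (u - 1) * (1 - y) ^ (v - 1)) := by
    rw [Complex.betaIntegral, ← intervalIntegral.integral_ofReal]
    refine intervalIntegral.integral_congr fun y hy => ?_
    rw [Set.uIcc_of_le zero_le_one] at hy
    rw [Complex.ofReal_mul, Complex.ofReal_cpow hy.1, Complex.ofReal_cpow (sub_nonneg.mpr hy.2)]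
    push_cast
    rfl
  have h := Complex.betaIntegral_eq_Gamma_mul_div u v (by simpa using hu) (by simpa using hv)
  rw [hbeta, ← Complex.ofReal_add, Complex.Gamma_ofReal, Complex.Gamma_ofReal,
    Complex.Gamma_ofReal] at h
  exact_mod_cast h

theorem integral_rpow_add_nat_mul_one_sub_rpow {α β : ℝ} (hα : -1 < α) (hβ : -1 < β)
    (j : ℕ) :
    ∫ y in (0 : ℝ)..1, y ^ (α + j) * (1 - y) ^ β =
      Real.Gamma (α + 1) * Real.Gamma (β + 1) / Real.Gamma (α + β + 2) *
        ((ascPochhammer ℝ j).eval (α + 1) / (ascPochhammer ℝ j).eval (α + β + 2)) := by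
  have hα1 : 0 < α + 1 := by linarith
  have hαβ : 0 < α + β + 2 := by linarith
  have hbeta := integral_rpow_mul_one_sub_rpow (u := α + 1 + j) (v := β + 1) (by positivity)
    (by linarith)
  rw [show α + 1 + j - 1 = α + j by ring, show β + 1 - 1 = β by ring,
    show α + 1 + j + (β + 1) = α + β + 2 + j by ring,
    Real.Gamma_add_nat hα1, Real.Gamma_add_nat hαβ] at hbeta
  rw [hbeta]
  have := (Real.Gamma_pos_of_pos hαβ).ne'
  have := (ascPochhammer_pos j _ hαβ).ne'
  field_simp

theorem stmt_18_general (N : ℕ) (hN : 1 ≤ N) (α β k : ℝ)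
    (hα : -1 < α) (hβ : -1 < β)
    (ω : Fin N → ℝ)
    (hω : ∀ m : Fin N, ω m =
      (Polynomial.eval (β - k + 1) (ascPochhammer ℝ (m : ℕ)) / (Nat.factorial (m : ℕ)))
        * (Polynomial.eval k (ascPochhammer ℝ (N - 1 - (m : ℕ)))
            / (Nat.factorial (N - 1 - (m : ℕ))))) :
    ∑ m : Fin N, ω m * ∫ y in (0:ℝ)..1, y ^ (α + (N : ℝ) - 1 - (m : ℕ)) * (1 - y) ^ β
      = Polynomial.eval (α + β - k + 2) (ascPochhammer ℝ (N - 1))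
          * Real.Gamma (α + 1) * Real.Gamma (β + N)
          / ((Nat.factorial (N - 1)) * Real.Gamma (α + β + N + 1)) := by
  obtain ⟨n, rfl⟩ : ∃ n, N = n + 1 := ⟨N - 1, by omega⟩
  have hαβ : 0 < α + β + 2 := by linarith
  set f : ℕ → ℝ := fun m =>
    (ascPochhammer ℝ m).eval ((α + β + 2) - k - (α + 1)) / m.factorial *
      ((ascPochhammer ℝ (n - m)).eval k / (n - m).factorial *
        ((ascPochhammer ℝ (n - m)).eval (α + 1) /
          (ascPochhammer ℝ (n - m)).eval (α + β + 2))) with hf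
  have hterm : ∀ m : Fin (n + 1),
      ω m * ∫ y in (0:ℝ)..1, y ^ (α + ((n + 1 : ℕ) : ℝ) - 1 - (m : ℕ)) * (1 - y) ^ β =
        Real.Gamma (α + 1) * Real.Gamma (β + 1) / Real.Gamma (α + β + 2) * f m := by
    intro m
    have hexp : α + ((n + 1 : ℕ) : ℝ) - 1 - (m : ℕ) = α + ((n - m : ℕ) : ℝ) := by
      rw [Nat.cast_sub (Nat.lt_succ_iff.mp m.isLt)]; push_cast; ring
    rw [hω, hexp, integral_rpow_add_nat_mul_one_sub_rpow hα hβ, Nat.add_sub_cancel, hf,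
      show α + β + 2 - k - (α + 1) = β - k + 1 by ring]
    ring
  rw [Fintype.sum_congr _ _ hterm, ← mul_sum, Fin.sum_univ_eq_sum_range f, hf,
    ascPochhammer_pfaff_saalschutz _ _ _ n (ascPochhammer_pos n _ hαβ).ne',
    Nat.add_sub_cancel, show β + ((n + 1 : ℕ) : ℝ) = β + 1 + n by push_cast; ring,
    show α + β + ((n + 1 : ℕ) : ℝ) + 1 = α + β + 2 + n by push_cast; ring,
    Real.Gamma_add_nat (by linarith) n, Real.Gamma_add_nat hαβ n,
    show α + β + 2 - k = α + β - k + 2 by ring, show α + β + 2 - (α + 1) = β + 1 by ring]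
  have := (Real.Gamma_pos_of_pos hαβ).ne'
  have := (ascPochhammer_pos n _ hαβ).ne'
  have := Nat.factorial_ne_zero n
  field_simp

/-- The normalizing-constant identity for the invariant distribution:
`Σ_{m=1}^N ω_m ∫₀¹ y^{α+N−m}(1−y)^β dy
  = (α+β−k+2)_{N−1} Γ(α+1) Γ(β+N) / ((N−1)! Γ(α+β+N+1))`.
(The summation index `m : Fin N` is 0-based: it corresponds to the paper's
`m+1`, so `ω m = (β−k+1)_m/m! · (k)_{N−1−m}/(N−1−m)!` and the exponent is
`α+N−1−m`.) -/
theorem stmt_18 (N : ℕ) (hN : 1 ≤ N) (α β k : ℝ)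
    (hα : -1 < α) (hβ : -1 < β) (hk : 0 < k) (hk' : k < β + 1)
    (ω : Fin N → ℝ)
    (hω : ∀ m : Fin N, ω m =
      (Polynomial.eval (β - k + 1) (ascPochhammer ℝ (m : ℕ)) / (Nat.factorial (m : ℕ)))
        * (Polynomial.eval k (ascPochhammer ℝ (N - 1 - (m : ℕ)))
            / (Nat.factorial (N - 1 - (m : ℕ))))) :
    ∑ m : Fin N, ω m * ∫ y in (0:ℝ)..1, y ^ (α + (N : ℝ) - 1 - (m : ℕ)) * (1 - y) ^ β
      = Polynomial.eval (α + β - k + 2) (ascPochhammer ℝ (N - 1))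
          * Real.Gamma (α + 1) * Real.Gamma (β + N)
          / ((Nat.factorial (N - 1)) * Real.Gamma (α + β + N + 1)) :=
  stmt_18_general N hN α β k hα hβ ω hω
end
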